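/- Let a > 0, t > 0 and x, s ∈ ℝ. Then √(a/π) · (e^{2at} − e^{-2at})^{-1/2} · exp( −a·(e^{at}x − e^{-at}s)² / (e^{2at} − e^{-2at}) + (a/2)·(x² − s²) ) = √( a / (2π·sinh(2at)) ) · exp( −(a/2)·(x² + s²)·coth(2at) + a·x·s / sinh(2at) ); that is, the heat kernel for the real harmonic oscillator obtained via the Bargmann transform coincides with the classical Mehler kernel. -/

import Mathlib

open Real

/-!
Writing `e^{±2u} = cosh 2u ± sinh 2u` with `u = at`, the Bargmann-side denominator
`e^{2u} − e^{−2u}` is `2 sinh 2u`, which turns the prefactor into the Mehler one, and expanding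
`(e^u x − e^{−u} s)²` splits the exponent into the `coth` and `1 / sinh` terms of Mehler's formula.
-/

namespace Real

theorem exp_sub_exp_neg (u : ℝ) : exp u - exp (-u) = 2 * sinh u := by
  rw [sinh_eq]; ring

theorem sq_exp_mul_sub_exp_neg_mul (u x s : ℝ) :
    (exp u * x - exp (-u) * s) ^ 2 =
      (cosh (2 * u) + sinh (2 * u)) * x ^ 2 - 2 * x * s
        + (cosh (2 * u) - sinh (2 * u)) * s ^ 2 := by
  have hexp : exp u * exp (-u) = 1 := by rw [← exp_add, add_neg_cancel, exp_zero]
  rw [cosh_add_sinh, cosh_sub_sinh, two_mul, exp_add, neg_add, exp_add]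
  linear_combination (-2 * x * s) * hexp

theorem mehler_exponent_eq (a u x s : ℝ) (hu : sinh (2 * u) ≠ 0) :
    -(a * (exp u * x - exp (-u) * s) ^ 2) / (exp (2 * u) - exp (-(2 * u)))
        + (a / 2) * (x ^ 2 - s ^ 2) =
      -(a / 2) * (x ^ 2 + s ^ 2) * (cosh (2 * u) / sinh (2 * u)) + a * x * s / sinh (2 * u) := by
  rw [exp_sub_exp_neg, sq_exp_mul_sub_exp_neg_mul]
  field_simp
  ring

theorem sqrt_div_pi_mul_inv_sqrt_two_mul {a : ℝ} (ha : 0 ≤ a) (y : ℝ) :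
    √(a / π) * (√(2 * y))⁻¹ = √(a / (2 * π * y)) := by
  rw [← div_eq_mul_inv, ← sqrt_div (div_nonneg ha pi_pos.le), div_div]
  congr 2; ring

end Real

theorem mehlerKernel_eq_classical (a t x s : ℝ) (ha : 0 < a) (ht : 0 < t) :
    Real.sqrt (a / Real.pi) *
        (Real.sqrt (Real.exp (2 * a * t) - Real.exp (-(2 * a * t))))⁻¹ *
        Real.exp (-(a * (Real.exp (a * t) * x - Real.exp (-(a * t)) * s) ^ 2)
            / (Real.exp (2 * a * t) - Real.exp (-(2 * a * t)))
          + (a / 2) * (x ^ 2 - s ^ 2)) =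
      Real.sqrt (a / (2 * Real.pi * Real.sinh (2 * a * t))) *
        Real.exp (-(a / 2) * (x ^ 2 + s ^ 2) * (Real.cosh (2 * a * t) / Real.sinh (2 * a * t))
          + a * x * s / Real.sinh (2 * a * t)) := by
  have hsinh : sinh (2 * (a * t)) ≠ 0 := (sinh_pos_iff.mpr (by positivity)).ne'
  simp only [mul_assoc 2 a t]
  rw [mehler_exponent_eq a (a * t) x s hsinh, exp_sub_exp_neg,
    sqrt_div_pi_mul_inv_sqrt_two_mul ha.le]
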